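/- Let G be a group of general type, i.e. presented by ⟨a,b | a^(2^α) = b^(2^β) = [a,b,a] = [a,b,b] = e, a^(2^(α+σ-γ)) = [a,b]^(2^σ)⟩ with integers satisfying β ≥ γ > σ ≥ 0, α + σ ≥ 2γ, and α + β + σ > 3. If α < β then G is not capable; moreover, if G is capable and γ = β, then α > β. -/
import Mathlib


/-- The paper's commutator convention: `[x,y] = x⁻¹y⁻¹xy`. -/
def pcomm {G : Type*} [Group G] (x y : G) : G := x⁻¹ * y⁻¹ * x * y

/-- A group is capable if it is isomorphic to `K/Z(K)` for some group `K`. -/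
def IsCapable (G : Type*) [Group G] : Prop :=
  ∃ (K : Type) (_ : Group K), Nonempty ((K ⧸ Subgroup.center K) ≃* G)

/-- Relators of the type (ii) (general type) presentation
`⟨a,b | a^(2^α) = b^(2^β) = [a,b,a] = [a,b,b] = e, a^(2^(α+σ-γ)) = [a,b]^(2^σ)⟩`. -/
def relsII (α β γ σ : ℕ) : Set (FreeGroup (Fin 2)) :=
  let a : FreeGroup (Fin 2) := FreeGroup.of 0
  let b : FreeGroup (Fin 2) := FreeGroup.of 1
  {a ^ 2 ^ α, b ^ 2 ^ β, pcomm (pcomm a b) a, pcomm (pcomm a b) b,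
    a ^ 2 ^ (α + σ - γ) * (pcomm a b ^ 2 ^ σ)⁻¹}

section AuxCalc

variable {K : Type*} [Group K]

private lemma map_pcomm {H : Type*} [Group H] (f : K →* H) (x y : K) :
    f (pcomm x y) = pcomm (f x) (f y) := by
  simp [pcomm]

private lemma equiv_pcomm {H : Type*} [Group H] (f : K ≃* H) (x y : K) :
    f (pcomm x y) = pcomm (f x) (f y) := by
  simp [pcomm]

private lemma pcomm_comm {M : Type*} [CommGroup M] (u v : M) : pcomm u v = 1 := by
  rw [pcomm, mul_right_comm]; simp

private lemma aux_G1 (a b c : K) (h : a * b = b * a * c) (hcb : Commute c b)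
    (n : ℕ) : a * b ^ n = b ^ n * a * c ^ n := by
  induction n with
  | zero => simp
  | succ n ih =>
    have hc : c * c ^ n = c ^ n * c := by rw [← pow_succ', pow_succ]
    calc a * b ^ (n+1) = (a * b ^ n) * b := by rw [pow_succ, mul_assoc]
      _ = b ^ n * a * c ^ n * b := by rw [ih]
      _ = b ^ n * (a * (c ^ n * b)) := by simp only [mul_assoc]
      _ = b ^ n * (a * (b * c ^ n)) := by rw [(hcb.pow_left n).eq]
      _ = b ^ n * (a * b) * c ^ n := by simp only [mul_assoc]
      _ = b ^ n * (b * a * c) * c ^ n := by rw [h]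
      _ = b ^ (n+1) * a * (c * c ^ n) := by rw [pow_succ]; simp only [mul_assoc]
      _ = b ^ (n+1) * a * c ^ (n+1) := by rw [hc, ← pow_succ]

private lemma aux_G2 (a b c : K) (h : a * b = b * a * c) (hca : Commute c a)
    (n : ℕ) : a ^ n * b = b * a ^ n * c ^ n := by
  induction n with
  | zero => simp
  | succ n ih =>
    calc a ^ (n+1) * b = a ^ n * (a * b) := by rw [pow_succ, mul_assoc]
      _ = a ^ n * (b * a * c) := by rw [h]
      _ = (a ^ n * b) * a * c := by simp only [mul_assoc]
      _ = b * a ^ n * c ^ n * a * c := by rw [ih]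
      _ = b * a ^ n * (c ^ n * a) * c := by simp only [mul_assoc]
      _ = b * a ^ n * (a * c ^ n) * c := by rw [(hca.pow_left n).eq]
      _ = b * a ^ (n+1) * c ^ (n+1) := by rw [pow_succ, pow_succ]; simp only [mul_assoc]

private lemma choose_succ_two (n : ℕ) : (n+1).choose 2 = n + n.choose 2 := by
  rw [show (2:ℕ) = 1 + 1 from rfl, Nat.choose_succ_succ, Nat.choose_one_right]

private lemma aux_L3 (x y u w : K) (hxy : x * y = y * x * u)
    (huy : u * y = y * u * w) (hwy : Commute w y) (hwu : Commute w u)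
    (n : ℕ) : x * y ^ n = y ^ n * x * u ^ n * w ^ (n.choose 2) := by
  have L2 := aux_G2 u y w huy hwu
  induction n with
  | zero => simp
  | succ n ih =>
    calc x * y ^ (n+1) = (x * y ^ n) * y := by rw [pow_succ, ← mul_assoc]
      _ = y ^ n * x * u ^ n * w ^ (n.choose 2) * y := by rw [ih]
      _ = y ^ n * x * (u ^ n * (w ^ (n.choose 2) * y)) := by simp only [mul_assoc]
      _ = y ^ n * x * (u ^ n * (y * w ^ (n.choose 2))) := by rw [(hwy.pow_left _).eq]
      _ = y ^ n * x * ((u ^ n * y) * w ^ (n.choose 2)) := by simp only [mul_assoc]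
      _ = y ^ n * x * ((y * u ^ n * w ^ n) * w ^ (n.choose 2)) := by rw [L2 n]
      _ = y ^ n * (x * y) * (u ^ n * (w ^ n * w ^ (n.choose 2))) := by simp only [mul_assoc]
      _ = y ^ n * (y * x * u) * (u ^ n * (w ^ n * w ^ (n.choose 2))) := by rw [hxy]
      _ = y ^ (n+1) * x * u ^ (n+1) * w ^ ((n+1).choose 2) := by
          rw [choose_succ_two, pow_add w n (n.choose 2), pow_succ y n, pow_succ' u n]
          simp only [mul_assoc]

private lemma aux_L4 (x y u v : K) (hxy : x * y = y * x * u)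
    (hux : u * x = x * u * v) (hvx : Commute v x) (hvu : Commute v u)
    (n : ℕ) : x ^ n * y = y * x ^ n * u ^ n * v ^ (n.choose 2) := by
  have L1' := aux_G1 u x v hux hvx
  induction n with
  | zero => simp
  | succ n ih =>
    calc x ^ (n+1) * y = x * (x ^ n * y) := by rw [pow_succ', mul_assoc]
      _ = x * (y * x ^ n * u ^ n * v ^ (n.choose 2)) := by rw [ih]
      _ = (x * y) * (x ^ n * (u ^ n * v ^ (n.choose 2))) := by simp only [mul_assoc]
      _ = (y * x * u) * (x ^ n * (u ^ n * v ^ (n.choose 2))) := by rw [hxy]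
      _ = y * x * (u * x ^ n) * (u ^ n * v ^ (n.choose 2)) := by simp only [mul_assoc]
      _ = y * x * (x ^ n * u * v ^ n) * (u ^ n * v ^ (n.choose 2)) := by rw [L1' n]
      _ = y * (x * x ^ n) * (u * (v ^ n * u ^ n)) * v ^ (n.choose 2) := by
          simp only [mul_assoc]
      _ = y * (x * x ^ n) * (u * (u ^ n * v ^ n)) * v ^ (n.choose 2) := by
          rw [(hvu.pow_pow n n).eq]
      _ = y * x ^ (n+1) * u ^ (n+1) * v ^ ((n+1).choose 2) := by
          rw [choose_succ_two, pow_add v n (n.choose 2), pow_succ' x n, pow_succ' u n]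
          simp only [mul_assoc]

private lemma inv_move {P x Q : K} (h : P * x = x * Q) : P⁻¹ * x = x * Q⁻¹ := by
  apply mul_right_cancel (b := Q)
  rw [mul_assoc, ← h, ← mul_assoc, inv_mul_cancel, one_mul, mul_assoc,
    inv_mul_cancel, mul_one]

private lemma pow_eq_one_of_dvd {g : K} {s t : ℕ} (h : g ^ s = 1) (hd : s ∣ t) :
    g ^ t = 1 := by
  obtain ⟨k, rfl⟩ := hd; rw [pow_mul, h, one_pow]

private lemma two_pow_dvd_choose_two {k s : ℕ} (h : s + 1 ≤ k) :
    (2:ℕ) ^ s ∣ (2^k).choose 2 := by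
  rw [Nat.choose_two_right]
  have h2 : (2:ℕ)^k = 2 * 2^(k-1) := by
    conv_lhs => rw [show k = (k-1)+1 by omega]
    rw [pow_succ']
  rw [h2, mul_assoc, Nat.mul_div_cancel_left _ (by norm_num : (0:ℕ) < 2)]
  exact dvd_mul_of_dvd_left (pow_dvd_pow 2 (by omega)) _

end AuxCalc

/-- The key commutator computation: under the centrality hypotheses coming
from a central extension of a general-type group with `α < β`, the element
`y ^ 2^(β-1)` commutes with `x`. -/
lemma central_pow {K : Type*} [Group K] (x y : K) (α β γ σ : ℕ)
    (hσγ : σ < γ) (hγβ : γ ≤ β) (h2γ : 2*γ ≤ α + σ) (hαβ : α < β)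
    (h3 : x ^ 2^α ∈ Subgroup.center K)
    (h4 : y ^ 2^β ∈ Subgroup.center K)
    (hv : pcomm (pcomm x y) x ∈ Subgroup.center K)
    (hw : pcomm (pcomm x y) y ∈ Subgroup.center K)
    (h5 : x ^ 2^(α+σ-γ) * ((pcomm x y) ^ 2^σ)⁻¹ ∈ Subgroup.center K) :
    x * y ^ 2^(β-1) = y ^ 2^(β-1) * x := by
  set u := pcomm x y with hu
  set v := pcomm u x with hvdef
  set w := pcomm u y with hwdef
  have hγα : γ + 1 ≤ α := by omega
  have hσα : σ + 2 ≤ α := by omega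
  have hγβ2 : γ + 2 ≤ β := by omega
  have bxy : x * y = y * x * u := by rw [hu]; simp [pcomm, mul_assoc]
  have bux : u * x = x * u * v := by rw [hvdef]; simp [pcomm, mul_assoc]
  have buy : u * y = y * u * w := by rw [hwdef]; simp [pcomm, mul_assoc]
  have hvc : ∀ g : K, Commute v g := fun g => (Subgroup.mem_center_iff.mp hv g).symm
  have hwc : ∀ g : K, Commute w g := fun g => (Subgroup.mem_center_iff.mp hw g).symm
  have L1 := aux_G2 u x v bux (hvc u)
  have L2 := aux_G2 u y w buy (hwc u)
  have L3 := aux_L3 x y u w bxy buy (hwc y) (hwc u)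
  have L4 := aux_L4 x y u v bxy bux (hvc x) (hvc u)
  -- E1 : u ^ 2^α * v ^ C = 1
  have E1 : u ^ 2^α * v ^ ((2^α).choose 2) = 1 := by
    have h := (Subgroup.mem_center_iff.mp h3 y).trans (L4 (2^α))
    rw [mul_assoc (y * x ^ 2^α)] at h
    exact (left_eq_mul.mp h).symm.symm
  -- E3 : v ^ 2^σ = 1
  have E3 : v ^ 2^σ = 1 := by
    have hL := L1 (2^σ)
    rw [mul_assoc] at hL
    have hinv := inv_move hL
    have hA := Subgroup.mem_center_iff.mp h5 x
    rw [mul_assoc (x ^ 2^(α+σ-γ)), hinv] at hA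
    simp only [← mul_assoc] at hA
    rw [← pow_succ, ← pow_succ'] at hA
    exact left_eq_mul.mp (inv_inj.mp (mul_left_cancel hA))
  have hvCα : v ^ ((2^α).choose 2) = 1 :=
    pow_eq_one_of_dvd E3 (two_pow_dvd_choose_two (by omega))
  have Eu : u ^ 2^α = 1 := by
    have h := E1; rw [hvCα, mul_one] at h; exact h
  have hvCm : v ^ ((2^(α+σ-γ)).choose 2) = 1 :=
    pow_eq_one_of_dvd E3 (two_pow_dvd_choose_two (by omega))
  -- E4 : w ^ 2^σ = u ^ 2^(α+σ-γ)
  have E4 : w ^ 2^σ = u ^ 2^(α+σ-γ) := by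
    have hL := L2 (2^σ)
    rw [mul_assoc] at hL
    have hinv := inv_move hL
    have hA := Subgroup.mem_center_iff.mp h5 y
    rw [mul_assoc (x ^ 2^(α+σ-γ)), hinv] at hA
    simp only [← mul_assoc] at hA
    -- hA : y * x^M * (u^B)⁻¹ = x^M * y * (u^B * w^B)⁻¹
    rw [L4 (2^(α+σ-γ)), hvCm, mul_one] at hA
    -- hA : y * x^M * (u^B)⁻¹ = y * x^M * u^M * (u^B * w^B)⁻¹
    simp only [mul_assoc] at hA
    have h2 := mul_left_cancel (mul_left_cancel hA)
    -- h2 : (u^B)⁻¹ = u^M * (u^B * w^B)⁻¹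
    have h3' := eq_mul_inv_iff_mul_eq.mp h2
    rw [inv_mul_cancel_left] at h3'
    exact h3'
  have Ew2 : w ^ 2^(β-2) = 1 := by
    rw [show (2:ℕ)^(β-2) = 2^σ * 2^(β-2-σ) by rw [← pow_add]; congr 1; omega,
      pow_mul, E4, ← pow_mul,
      show (2:ℕ)^(α+σ-γ) * 2^(β-2-σ) = 2^α * 2^(β-2-γ) by
        rw [← pow_add, ← pow_add]; congr 1; omega,
      pow_mul, Eu, one_pow]
  have hu2 : u ^ 2^(β-1) = 1 := by
    rw [show (2:ℕ)^(β-1) = 2^α * 2^(β-1-α) by rw [← pow_add]; congr 1; omega,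
      pow_mul, Eu, one_pow]
  have hwC : w ^ ((2^(β-1)).choose 2) = 1 :=
    pow_eq_one_of_dvd Ew2 (two_pow_dvd_choose_two (by omega))
  have h := L3 (2^(β-1))
  rw [hu2, hwC, mul_one, mul_one] at h
  exact h

/-- In the presented group of general type, `b ^ 2^(β-1) ≠ 1`; this is seen
in the cyclic quotient `ZMod (2^β)`. -/
lemma b_pow_ne (α β γ σ : ℕ) (hβ : 1 ≤ β) :
    (PresentedGroup.of 1 : PresentedGroup (relsII α β γ σ)) ^ 2^(β-1) ≠ 1 := by
  intro hcontr
  haveI : NeZero ((2:ℕ)^β) := ⟨by positivity⟩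
  set f : Fin 2 → Multiplicative (ZMod (2^β)) :=
    fun i => if i = 0 then 1 else Multiplicative.ofAdd 1 with hf
  have hone : ∀ n : ℕ, (f 1) ^ n = Multiplicative.ofAdd ((n : ZMod (2^β))) := by
    intro n
    rw [hf]
    simp only [if_neg (by decide : (1:Fin 2) ≠ 0)]
    rw [← ofAdd_nsmul, nsmul_eq_mul, mul_one]
  have hrels : ∀ r ∈ relsII α β γ σ, FreeGroup.lift f r = 1 := by
    intro r hr
    simp only [relsII, Set.mem_insert_iff, Set.mem_singleton_iff] at hr
    rcases hr with rfl | rfl | rfl | rfl | rfl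
    · rw [map_pow, FreeGroup.lift_apply_of]
      simp [hf]
    · rw [map_pow, FreeGroup.lift_apply_of, hone, ZMod.natCast_self, ofAdd_zero]
    · rw [map_pcomm, map_pcomm, pcomm_comm]
    · rw [map_pcomm, map_pcomm, pcomm_comm]
    · rw [map_mul, map_inv, map_pow, map_pow, map_pcomm, pcomm_comm,
        FreeGroup.lift_apply_of]
      simp [hf]
  have h1 := congrArg (PresentedGroup.toGroup hrels) hcontr
  rw [map_pow, map_one, PresentedGroup.toGroup.of, hone] at h1
  have h2 : ((2^(β-1) : ℕ) : ZMod (2^β)) = 0 := by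
    have := ofAdd_eq_one.mp h1
    exact this
  have h3 : (2:ℕ)^β ∣ 2^(β-1) := (ZMod.natCast_eq_zero_iff _ _).mp h2
  have h4 := Nat.le_of_dvd (by positivity) h3
  have h5 : (2:ℕ)^(β-1) < 2^β := pow_lt_pow_right₀ (by norm_num) (by omega)
  omega

/-- For a general type group `G` (with `β ≥ γ > σ ≥ 0`, `α + σ ≥ 2γ`,
`α + β + σ > 3`): if `α < β` then `G` is not capable; moreover if `G` is
capable and `γ = β` then `α > β`. -/
theorem general_type_alpha_beta_conditions (α β γ σ : ℕ)
    (hσγ : σ < γ) (hγβ : γ ≤ β) (h2γ : 2 * γ ≤ α + σ)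
    (hsum : 3 < α + β + σ) :
    (α < β → ¬ IsCapable (PresentedGroup (relsII α β γ σ))) ∧
    (IsCapable (PresentedGroup (relsII α β γ σ)) → γ = β → β < α) := by
  refine ⟨fun hαβ hcap => ?_, fun _ h => by omega⟩
  obtain ⟨K, _, ⟨φ⟩⟩ := hcap
  set G := PresentedGroup (relsII α β γ σ) with hG
  let a : G := PresentedGroup.of 0
  let b : G := PresentedGroup.of 1
  let π : K →* K ⧸ Subgroup.center K := QuotientGroup.mk' (Subgroup.center K)
  obtain ⟨x, hx⟩ := QuotientGroup.mk'_surjective (Subgroup.center K) (φ.symm a)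
  obtain ⟨y, hy⟩ := QuotientGroup.mk'_surjective (Subgroup.center K) (φ.symm b)
  have hπker : ∀ g : K, π g = 1 ↔ g ∈ Subgroup.center K := fun g =>
    QuotientGroup.eq_one_iff g
  have hrel : ∀ r ∈ relsII α β γ σ, PresentedGroup.mk (relsII α β γ σ) r = 1 :=
    fun r hr => (QuotientGroup.eq_one_iff r).mpr (Subgroup.subset_normalClosure hr)
  -- the relators as equations in G
  have mem1 : (FreeGroup.of 0 : FreeGroup (Fin 2)) ^ 2^α ∈ relsII α β γ σ := by
    simp [relsII]
  have mem2 : (FreeGroup.of 1 : FreeGroup (Fin 2)) ^ 2^β ∈ relsII α β γ σ := by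
    simp [relsII]
  have mem3 : pcomm (pcomm (FreeGroup.of 0) (FreeGroup.of 1)) (FreeGroup.of 0)
      ∈ relsII α β γ σ := by simp [relsII]
  have mem4 : pcomm (pcomm (FreeGroup.of 0) (FreeGroup.of 1)) (FreeGroup.of 1)
      ∈ relsII α β γ σ := by simp [relsII]
  have mem5 : (FreeGroup.of 0 : FreeGroup (Fin 2)) ^ 2^(α+σ-γ) *
      (pcomm (FreeGroup.of 0) (FreeGroup.of 1) ^ 2^σ)⁻¹ ∈ relsII α β γ σ := by
    simp [relsII]
  have ha : a ^ 2^α = 1 := by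
    have h := hrel _ mem1; rw [map_pow] at h; exact h
  have hb : b ^ 2^β = 1 := by
    have h := hrel _ mem2; rw [map_pow] at h; exact h
  have hc1 : pcomm (pcomm a b) a = 1 := by
    have h := hrel _ mem3; rw [map_pcomm, map_pcomm] at h; exact h
  have hc2 : pcomm (pcomm a b) b = 1 := by
    have h := hrel _ mem4; rw [map_pcomm, map_pcomm] at h; exact h
  have hr5 : a ^ 2^(α+σ-γ) * (pcomm a b ^ 2^σ)⁻¹ = 1 := by
    have h := hrel _ mem5
    rw [map_mul, map_inv, map_pow, map_pow, map_pcomm] at h; exact h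
  -- pull the relators back to centrality statements in K
  have key : ∀ (wK : K) (wG : G), π wK = φ.symm wG → wG = 1 →
      wK ∈ Subgroup.center K := by
    intro wK wG h h1
    exact (hπker wK).mp (by rw [h, h1, map_one])
  have h3 : x ^ 2^α ∈ Subgroup.center K :=
    key _ (a ^ 2^α) (by rw [map_pow, hx, ← map_pow]) ha
  have h4 : y ^ 2^β ∈ Subgroup.center K :=
    key _ (b ^ 2^β) (by rw [map_pow, hy, ← map_pow]) hb
  have hv : pcomm (pcomm x y) x ∈ Subgroup.center K :=
    key _ (pcomm (pcomm a b) a)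
      (by rw [map_pcomm, map_pcomm, hx, hy, ← equiv_pcomm, ← equiv_pcomm]) hc1
  have hw : pcomm (pcomm x y) y ∈ Subgroup.center K :=
    key _ (pcomm (pcomm a b) b)
      (by rw [map_pcomm, map_pcomm, hx, hy, ← equiv_pcomm, ← equiv_pcomm]) hc2
  have h5 : x ^ 2^(α+σ-γ) * ((pcomm x y) ^ 2^σ)⁻¹ ∈ Subgroup.center K :=
    key _ (a ^ 2^(α+σ-γ) * (pcomm a b ^ 2^σ)⁻¹)
      (by rw [map_mul, map_inv, map_pow, map_pow, map_pcomm, hx, hy,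
        ← equiv_pcomm, ← map_pow, ← map_pow, ← map_inv, ← map_mul]) hr5
  have hxyc := central_pow x y α β γ σ hσγ hγβ h2γ hαβ h3 h4 hv hw h5
  -- generation : every element of K is (elt of ⟨x,y⟩) * (central)
  have habtop : Subgroup.closure ({a, b} : Set G) = ⊤ := by
    rw [eq_top_iff, ← PresentedGroup.closure_range_of (relsII α β γ σ)]
    refine Subgroup.closure_mono ?_
    rintro _ ⟨i, rfl⟩
    fin_cases i
    · exact Set.mem_insert _ _
    · exact Set.mem_insert_of_mem _ rfl
  have hgen : ∀ g : K, ∃ h ∈ Subgroup.closure ({x, y} : Set K), π h = π g := by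
    intro g
    have h1 : π g ∈ Subgroup.map π (Subgroup.closure ({x, y} : Set K)) := by
      rw [MonoidHom.map_closure, Set.image_pair, hx, hy]
      have himg : ({φ.symm a, φ.symm b} : Set (K ⧸ Subgroup.center K)) =
          (φ.symm.toMonoidHom : G →* K ⧸ Subgroup.center K) '' {a, b} := by
        rw [Set.image_pair]; rfl
      rw [himg, ← MonoidHom.map_closure, habtop,
        Subgroup.map_top_of_surjective _ φ.symm.surjective]
      exact Subgroup.mem_top _
    exact Subgroup.mem_map.mp h1
  have hcent : y ^ 2^(β-1) ∈ Subgroup.center K := by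
    rw [Subgroup.mem_center_iff]
    intro g
    obtain ⟨h, hh, hhg⟩ := hgen g
    have hz : h⁻¹ * g ∈ Subgroup.center K :=
      (hπker _).mp (by rw [map_mul, map_inv, hhg, inv_mul_cancel])
    have hcomm : h * y ^ 2^(β-1) = y ^ 2^(β-1) * h := by
      refine Subgroup.closure_induction
        (p := fun t _ => t * y ^ 2^(β-1) = y ^ 2^(β-1) * t) ?_ ?_ ?_ ?_ hh
      · rintro s (rfl | rfl)
        · exact hxyc
        · rw [← pow_succ', pow_succ]
      · simp
      · intro p q _ _ hp hq
        rw [mul_assoc, hq, ← mul_assoc, hp, mul_assoc]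
      · intro p _ hp
        exact (Commute.inv_left hp : _)
    have hg : g = h * (h⁻¹ * g) := by rw [← mul_assoc, mul_inv_cancel, one_mul]
    calc g * y ^ 2^(β-1) = h * ((h⁻¹ * g) * y ^ 2^(β-1)) := by
          rw [← mul_assoc, ← hg]
      _ = h * (y ^ 2^(β-1) * (h⁻¹ * g)) := by
          rw [(Subgroup.mem_center_iff.mp hz (y ^ 2^(β-1))).symm]
      _ = (h * y ^ 2^(β-1)) * (h⁻¹ * g) := by rw [mul_assoc]
      _ = y ^ 2^(β-1) * (h * (h⁻¹ * g)) := by rw [hcomm, mul_assoc]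
      _ = y ^ 2^(β-1) * g := by rw [← hg]
  have hπy : π (y ^ 2^(β-1)) = 1 := (hπker _).mpr hcent
  have hbb : b ^ 2^(β-1) = 1 := by
    have h1 : φ.symm (b ^ 2^(β-1)) = 1 := by
      rw [map_pow, ← hy, ← map_pow, hπy]
    have h2 := congrArg φ h1
    rwa [MulEquiv.apply_symm_apply, map_one] at h2
  exact b_pow_ne α β γ σ (by omega) hbb
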